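/- arXiv:2511.02053 — 3 statements merged into one kernel-verified Lean document; each statement's English description precedes it below -/
import Mathlib

section
/- For any (p,q) ∈ {1,2}² and any measurable φ^{pq}: [0,R] → ℝ with φ^{pq} ∈ L²(ρ̃^{pq}), the single-kernel force field F_{φ^{pq}}: ℝ^{dN} → ℝ^{dN}, whose i-th block equals (1/N) Σ_{i'∈I_q, i'≠i} φ^{pq}(‖x_{i'}−x_i‖)(x_{i'}−x_i) for i ∈ I_p and is zero for i ∉ I_p, satisfies ‖F_{φ^{pq}}‖²_{L²(ρ_X)} ≤ ((N−1)/N) ‖φ^{pq}‖²_{L²(ρ̃^{pq})}. -/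
open MeasureTheory
open scoped BigOperators ENNReal RealInnerProductSpace

noncomputable section

/-- configuration space of `N` agents in `ℝ^d` -/
abbrev Conf (d N : ℕ) : Type := Fin N → EuclideanSpace ℝ (Fin d)

/-- species of agent `i`: `0` if `i < N₁` (type 1), `1` otherwise (type 2) -/
def typeOf (N1 : ℕ) {N : ℕ} (i : Fin N) : Fin 2 := if (i : ℕ) < N1 then 0 else 1

/-- single-kernel force field `F_{φ^{pq}}`: the `i`-th block is
`(1/N) ∑_{i' ∈ I_q, i' ≠ i} φ^{pq}(‖x_{i'} − x_i‖)(x_{i'} − x_i)` for `i ∈ I_p`,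
and `0` for `i ∉ I_p`. -/
def singleForce {d N : ℕ} (N1 : ℕ) (p q : Fin 2) (f : ℝ → ℝ) (X : Conf d N) :
    Conf d N :=
  fun i => if typeOf N1 i = p then
      (N : ℝ)⁻¹ • ∑ i' : Fin N,
        (if typeOf N1 i' = q ∧ i' ≠ i then f (‖X i' - X i‖) • (X i' - X i) else 0)
    else 0

/-- number of agents of species `p` -/
def numType (N1 N2 : ℕ) (p : Fin 2) : ℕ := if p = 0 then N1 else N2

/-- the pair-normalisation `Z_{pq}` -/
def pairCount (N1 N2 : ℕ) (p q : Fin 2) : ℕ :=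
  if p = q then numType N1 N2 p * (numType N1 N2 p - 1)
  else numType N1 N2 p * numType N1 N2 q

/-- pairwise-distance measure `ρ^{pq}`: the average over type-`(p,q)` pairs `(i,i')`
of the pushforward of `ρ_X` under `X ↦ ‖x_{i'} − x_i‖`, normalised by `Z_{pq}`. -/
def pairMeasure {d N : ℕ} (N1 N2 : ℕ) (ρX : Measure (Conf d N)) (p q : Fin 2) :
    Measure ℝ :=
  (pairCount N1 N2 p q : ℝ≥0∞)⁻¹ • ∑ i : Fin N, ∑ i' : Fin N,
    (if typeOf N1 i = p ∧ typeOf N1 i' = q ∧ i ≠ i'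
      then Measure.map (fun X : Conf d N => ‖X i' - X i‖) ρX else 0)

/-- weighted measure `ρ̃^{pq}`, `dρ̃^{pq}(r) = r² dρ^{pq}(r)` -/
def tildeMeasure {d N : ℕ} (N1 N2 : ℕ) (ρX : Measure (Conf d N)) (p q : Fin 2) :
    Measure ℝ :=
  (pairMeasure N1 N2 ρX p q).withDensity fun r => ENNReal.ofReal (r ^ 2)

/-! Each block `F_i` is `N⁻¹` times a sum of at most `N - 1` pair forces
`φ(r_{ii'}) 𝐫_{ii'}`, so by Cauchy–Schwarz `‖F_i‖² ≤ (N - 1)/N² ∑_{i'} φ(r_{ii'})² r_{ii'}²`.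
Integrating against `ρ_X` and summing over `i`, the double sum becomes
`Z_{pq} ‖φ‖²_{L²(ρ̃^{pq})}`, and `Z_{pq} ≤ N²`. The estimate is carried out for lower Lebesgue integrals, where no integrability
of `F` is needed. -/

theorem norm_sum_sq_le_card_mul_sum_sq {ι E : Type*} [SeminormedAddCommGroup E]
    (s : Finset ι) (v : ι → E) :
    ‖∑ i ∈ s, v i‖ ^ 2 ≤ s.card * ∑ i ∈ s, ‖v i‖ ^ 2 :=
  (pow_le_pow_left₀ (norm_nonneg _) (norm_sum_le s v) 2).trans sq_sum_le_card_mul_sum_sq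

theorem ofReal_integral_le_lintegral_ofReal {α : Type*} [MeasurableSpace α] {μ : Measure α}
    {f : α → ℝ} (hf : 0 ≤ᵐ[μ] f) :
    ENNReal.ofReal (∫ x, f x ∂μ) ≤ ∫⁻ x, ENNReal.ofReal (f x) ∂μ := by
  by_cases hfi : Integrable f μ
  · exact (ofReal_integral_eq_lintegral_ofReal hfi hf).le
  · simp [integral_undef hfi]

theorem natCast_sub_one_div_nonneg (n : ℕ) : 0 ≤ ((n : ℝ) - 1) / n := by
  rcases n with _ | n
  · simp
  · push_cast
    rw [add_sub_cancel_right]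
    positivity

theorem ofReal_sub_one_div_sq_le {N Z : ℕ} (hZ : Z ≤ N ^ 2) :
    ENNReal.ofReal (((N : ℝ) - 1) / N ^ 2) ≤ ENNReal.ofReal ((N : ℝ) - 1) * (Z : ℝ≥0∞)⁻¹ := by
  rcases N with _ | n
  · simp
  · have hZ' : (Z : ℝ≥0∞) ≤ ((n + 1 : ℕ) : ℝ≥0∞) ^ 2 := by exact_mod_cast hZ
    rw [div_eq_mul_inv, ENNReal.ofReal_mul (by push_cast; linarith)]
    gcongr
    rw [ENNReal.ofReal_inv_of_pos (by positivity), ENNReal.ofReal_pow (by positivity),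
      ENNReal.ofReal_natCast]
    exact ENNReal.inv_le_inv.2 hZ'

section SingleForce

variable {d N : ℕ} (N1 : ℕ) (p q : Fin 2)

theorem singleForce_apply_of_typeOf_eq (f : ℝ → ℝ) (X : Conf d N) {i : Fin N}
    (hi : typeOf N1 i = p) :
    singleForce N1 p q f X i = (N : ℝ)⁻¹ • ∑ i' ∈ Finset.univ.filter
      (fun i' => typeOf N1 i' = q ∧ i ≠ i'), f ‖X i' - X i‖ • (X i' - X i) := by
  simp only [singleForce, if_pos hi, Finset.sum_filter, ne_comm]

theorem norm_singleForce_sq_le (f : ℝ → ℝ) (X : Conf d N) (i : Fin N) :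
    ‖singleForce N1 p q f X i‖ ^ 2 ≤ ((N : ℝ) - 1) / N ^ 2 * ∑ i' : Fin N,
      if typeOf N1 i = p ∧ typeOf N1 i' = q ∧ i ≠ i' then
        ‖f ‖X i' - X i‖ • (X i' - X i)‖ ^ 2 else 0 := by
  by_cases hi : typeOf N1 i = p
  · set s := Finset.univ.filter fun i' => typeOf N1 i' = q ∧ i ≠ i'
    have hs : (s.card : ℝ) ≤ N - 1 := by
      have hcard : s.card ≤ N - 1 := by
        simpa using Finset.card_le_card (t := Finset.univ.erase i) fun j hj => by
          simp_all [s, eq_comm]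
      have hN : 1 ≤ N := i.pos
      exact_mod_cast hcard
    calc ‖singleForce N1 p q f X i‖ ^ 2
        = (N : ℝ)⁻¹ ^ 2 * ‖∑ i' ∈ s, f ‖X i' - X i‖ • (X i' - X i)‖ ^ 2 := by
          rw [singleForce_apply_of_typeOf_eq N1 p q f X hi, norm_smul, mul_pow,
            norm_inv, RCLike.norm_natCast]
      _ ≤ (N : ℝ)⁻¹ ^ 2 * ((N - 1) * ∑ i' ∈ s, ‖f ‖X i' - X i‖ • (X i' - X i)‖ ^ 2) := by
          gcongr
          exact (norm_sum_sq_le_card_mul_sum_sq _ _).trans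
            (mul_le_mul_of_nonneg_right hs (by positivity))
      _ = _ := by
          simp only [s, Finset.sum_filter, hi, true_and]
          ring
  · simp only [singleForce, hi, if_false, false_and, norm_zero]
    simp

theorem ofReal_norm_singleForce_sq_le (f : ℝ → ℝ) (X : Conf d N) (i : Fin N) :
    ENNReal.ofReal (‖singleForce N1 p q f X i‖ ^ 2) ≤
      ENNReal.ofReal (((N : ℝ) - 1) / N ^ 2) * ∑ i' : Fin N,
        if typeOf N1 i = p ∧ typeOf N1 i' = q ∧ i ≠ i' then
          ENNReal.ofReal (‖X i' - X i‖ ^ 2) * ENNReal.ofReal (f ‖X i' - X i‖ ^ 2) else 0 := by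
  refine (ENNReal.ofReal_le_ofReal (norm_singleForce_sq_le N1 p q f X i)).trans_eq ?_
  rw [ENNReal.ofReal_mul' (Finset.sum_nonneg fun _ _ => by positivity),
    ENNReal.ofReal_sum_of_nonneg fun _ _ => by positivity]
  congr 1
  refine Finset.sum_congr rfl fun i' _ => ?_
  split_ifs
  · rw [norm_smul, Real.norm_eq_abs, mul_pow, sq_abs, mul_comm,
      ENNReal.ofReal_mul (by positivity)]
  · exact ENNReal.ofReal_zero

end SingleForce

theorem lintegral_tildeMeasure {d N : ℕ} (N1 N2 : ℕ) (ρX : Measure (Conf d N)) (p q : Fin 2)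
    {f : ℝ → ℝ≥0∞} (hf : Measurable f) :
    ∫⁻ r, f r ∂(tildeMeasure N1 N2 ρX p q) = (pairCount N1 N2 p q : ℝ≥0∞)⁻¹ *
      ∑ i : Fin N, ∑ i' : Fin N, if typeOf N1 i = p ∧ typeOf N1 i' = q ∧ i ≠ i' then
        ∫⁻ X, ENNReal.ofReal (‖X i' - X i‖ ^ 2) * f ‖X i' - X i‖ ∂ρX else 0 := by
  rw [tildeMeasure, lintegral_withDensity_eq_lintegral_mul _ (by fun_prop) hf, pairMeasure,
    lintegral_smul_measure, lintegral_finsetSum_measure, smul_eq_mul]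
  congr 1
  refine Finset.sum_congr rfl fun i _ => ?_
  rw [lintegral_finsetSum_measure]
  refine Finset.sum_congr rfl fun i' _ => ?_
  split_ifs
  · exact lintegral_map (by fun_prop) (by fun_prop)
  · exact lintegral_zero_measure _

theorem numType_le (N1 N2 : ℕ) (p : Fin 2) : numType N1 N2 p ≤ N1 + N2 := by
  unfold numType; split_ifs <;> omega

theorem pairCount_le_sq (N1 N2 : ℕ) (p q : Fin 2) : pairCount N1 N2 p q ≤ (N1 + N2) ^ 2 := by
  rw [sq]
  unfold pairCount
  split_ifs
  · exact Nat.mul_le_mul (numType_le N1 N2 p) ((Nat.sub_le _ _).trans (numType_le N1 N2 p))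
  · exact Nat.mul_le_mul (numType_le N1 N2 p) (numType_le N1 N2 q)

theorem sum_lintegral_norm_singleForce_sq_le {d N : ℕ} (N1 N2 : ℕ) (ρX : Measure (Conf d N))
    (p q : Fin 2) (hZ : pairCount N1 N2 p q ≤ N ^ 2) {f : ℝ → ℝ} (hf : Measurable f) :
    ∑ i : Fin N, ∫⁻ X, ENNReal.ofReal (‖singleForce N1 p q f X i‖ ^ 2) ∂ρX ≤
      ENNReal.ofReal ((N : ℝ) - 1) *
        ∫⁻ r, ENNReal.ofReal (f r ^ 2) ∂(tildeMeasure N1 N2 ρX p q) := by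
  set a : ℝ≥0∞ := ENNReal.ofReal (((N : ℝ) - 1) / N ^ 2)
  set h : Fin N → Fin N → Conf d N → ℝ≥0∞ := fun i i' X =>
    ENNReal.ofReal (‖X i' - X i‖ ^ 2) * ENNReal.ofReal (f ‖X i' - X i‖ ^ 2)
  have hint (i : Fin N) : ∫⁻ X, a * ∑ i', (if typeOf N1 i = p ∧ typeOf N1 i' = q ∧ i ≠ i' then
      h i i' X else 0) ∂ρX = a * ∑ i', if typeOf N1 i = p ∧ typeOf N1 i' = q ∧ i ≠ i' then
      ∫⁻ X, h i i' X ∂ρX else 0 := by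
    rw [lintegral_const_mul' _ _ ENNReal.ofReal_ne_top, lintegral_finsetSum' _ fun i' _ => ?_]
    · congr 1
      refine Finset.sum_congr rfl fun i' _ => ?_
      split_ifs <;> simp
    · split_ifs
      · fun_prop
      · exact aemeasurable_const
  calc ∑ i, ∫⁻ X, ENNReal.ofReal (‖singleForce N1 p q f X i‖ ^ 2) ∂ρX
      ≤ ∑ i, a * ∑ i', if typeOf N1 i = p ∧ typeOf N1 i' = q ∧ i ≠ i' then
          ∫⁻ X, h i i' X ∂ρX else 0 :=
        Finset.sum_le_sum fun i _ =>
          (lintegral_mono (ofReal_norm_singleForce_sq_le N1 p q f · i)).trans_eq (hint i)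
    _ ≤ ENNReal.ofReal ((N : ℝ) - 1) * (pairCount N1 N2 p q : ℝ≥0∞)⁻¹ * ∑ i, ∑ i',
          if typeOf N1 i = p ∧ typeOf N1 i' = q ∧ i ≠ i' then ∫⁻ X, h i i' X ∂ρX else 0 := by
        rw [← Finset.mul_sum]
        gcongr
        exact ofReal_sub_one_div_sq_le hZ
    _ = _ := by
        rw [mul_assoc, lintegral_tildeMeasure N1 N2 ρX p q (by fun_prop)]

theorem singleForce_L2_bound_general
    (d N1 N2 : ℕ)
    (ρX : Measure (Conf d (N1 + N2)))
    (p q : Fin 2) (φ : ℝ → ℝ) (hφ_meas : Measurable φ)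
    (hφ_L2 : MemLp φ 2 (tildeMeasure N1 N2 ρX p q)) :
    ((N1 + N2 : ℝ))⁻¹ *
        ∑ i : Fin (N1 + N2), ∫ X, ‖singleForce N1 p q φ X i‖ ^ 2 ∂ρX
      ≤ (((N1 + N2 : ℝ) - 1) / (N1 + N2 : ℝ)) *
          ∫ r, (φ r) ^ 2 ∂(tildeMeasure N1 N2 ρX p q) := by
  have hcoef : 0 ≤ ((N1 + N2 : ℝ) - 1) / (N1 + N2 : ℝ) := by
    exact_mod_cast natCast_sub_one_div_nonneg (N1 + N2)
  have hφ_sq : ENNReal.ofReal (∫ r, φ r ^ 2 ∂(tildeMeasure N1 N2 ρX p q)) =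
      ∫⁻ r, ENNReal.ofReal (φ r ^ 2) ∂(tildeMeasure N1 N2 ρX p q) :=
    ofReal_integral_eq_lintegral_ofReal hφ_L2.integrable_sq (ae_of_all _ fun _ => sq_nonneg _)
  have hbound := sum_lintegral_norm_singleForce_sq_le N1 N2 ρX p q
    (pairCount_le_sq N1 N2 p q) hφ_meas
  push_cast at hbound
  rw [← ENNReal.ofReal_le_ofReal_iff (mul_nonneg hcoef (integral_nonneg fun _ => sq_nonneg _))]
  calc ENNReal.ofReal ((N1 + N2 : ℝ)⁻¹ * ∑ i, ∫ X, ‖singleForce N1 p q φ X i‖ ^ 2 ∂ρX)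
      ≤ ENNReal.ofReal (N1 + N2 : ℝ)⁻¹ *
          ∑ i, ∫⁻ X, ENNReal.ofReal (‖singleForce N1 p q φ X i‖ ^ 2) ∂ρX := by
        rw [ENNReal.ofReal_mul (by positivity),
          ENNReal.ofReal_sum_of_nonneg fun _ _ => integral_nonneg fun _ => sq_nonneg _]
        gcongr
        exact ofReal_integral_le_lintegral_ofReal (ae_of_all _ fun _ => sq_nonneg _)
    _ ≤ _ := by
        grw [hbound]
        rw [← hφ_sq, ← mul_assoc, ← ENNReal.ofReal_mul (by positivity), inv_mul_eq_div,
          ← ENNReal.ofReal_mul hcoef]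

/-- For any `(p,q) ∈ {1,2}²` and any measurable `φ^{pq} : [0,R] → ℝ` with
`φ^{pq} ∈ L²(ρ̃^{pq})`, the single-kernel force field satisfies
`‖F_{φ^{pq}}‖²_{L²(ρ_X)} ≤ ((N−1)/N) ‖φ^{pq}‖²_{L²(ρ̃^{pq})}`, where
`‖g‖²_{L²(ρ_X)} = (1/N) ∑ᵢ ∫ ‖gᵢ(X)‖² dρ_X(X)`. -/
theorem singleForce_L2_bound
    (d N1 N2 : ℕ) (hd : 0 < d) (hN1 : 0 < N1) (hN2 : 0 < N2)
    (R : ℝ) (hR : 0 < R)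
    (ρX : Measure (Conf d (N1 + N2))) [IsProbabilityMeasure ρX]
    -- `ρ_X` is supported where all pairwise distances lie in `[0,R]`
    (hsupp : ∀ᵐ X ∂ρX, ∀ i i' : Fin (N1 + N2), ‖X i' - X i‖ ≤ R)
    (p q : Fin 2) (φ : ℝ → ℝ) (hφ_meas : Measurable φ)
    (hφ_L2 : MemLp φ 2 (tildeMeasure N1 N2 ρX p q)) :
    ((N1 + N2 : ℝ))⁻¹ *
        ∑ i : Fin (N1 + N2), ∫ X, ‖singleForce N1 p q φ X i‖ ^ 2 ∂ρX
      ≤ (((N1 + N2 : ℝ) - 1) / (N1 + N2 : ℝ)) *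
          ∫ r, (φ r) ^ 2 ∂(tildeMeasure N1 N2 ρX p q) :=
  singleForce_L2_bound_general d N1 N2 ρX p q φ hφ_meas hφ_L2

end
end

section
/- The operator A: ∏_{p,q} H_{K^{pq}} → L²(ρ_X) defined by Aφ = F_φ is a bounded linear operator, and for every φ = (φ^{11},φ^{12},φ^{21},φ^{22}) it satisfies ‖Aφ‖²_{L²(ρ_X)} ≤ Σ_{p,q} 2 κ_{pq}² R² ‖φ^{pq}‖²_{H_{K^{pq}}}. -/
/-! Each interaction kernel is `φ^{pq}(r) = ⟪φ^{pq}, K^{pq}_r⟫`, so on `[0,R]` it is bounded by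
`κ_{pq} ‖φ^{pq}‖` (Cauchy–Schwarz) and continuous, because
`‖K_r - K_s‖² = K(r,r) - 2 K(r,s) + K(s,s)`. On configurations whose pairwise distances are at most
`R`, the force on an agent of species `p` is therefore at most `R ∑_q κ_{pq} ‖φ^{pq}‖`, whose square
is at most `2 R² ∑_q κ_{pq}² ‖φ^{pq}‖²` (Cauchy–Schwarz over the two species). Averaging over the
agents bounds the `L²(ρ_X)` norm; since `φ ↦ F_φ` is linear, the bound makes it a continuous linear
map into `L²`. -/

open MeasureTheory
open scoped BigOperators ENNReal RealInnerProductSpace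

noncomputable section

/-- the configuration space viewed as the Hilbert space `ℝ^{dN}` -/
abbrev EConf (d N : ℕ) : Type := PiLp 2 (fun _ : Fin N => EuclideanSpace ℝ (Fin d))

/-- two-species force field `F_φ` for a kernel family `φ = (φ^{pq})` -/
def forceField {d N : ℕ} (N1 : ℕ) (ψ : Fin 2 → Fin 2 → ℝ → ℝ) (X : Conf d N) :
    Conf d N :=
  fun i => (N : ℝ)⁻¹ • ∑ i' : Fin N,
    ψ (typeOf N1 i) (typeOf N1 i') (‖X i' - X i‖) • (X i' - X i)

/-- function represented by an RKHS element, `φ^{pq}(r) = ⟪φ^{pq}, K^{pq}_r⟫` -/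
def rkhsFun {H : Fin 2 → Fin 2 → Type*} [∀ p q, NormedAddCommGroup (H p q)]
    [∀ p q, InnerProductSpace ℝ (H p q)] (k : ∀ p q, ℝ → H p q)
    (φ : ∀ p q, H p q) : Fin 2 → Fin 2 → ℝ → ℝ :=
  fun p q r => ⟪φ p q, k p q r⟫

open Filter Topology in
theorem continuousOn_of_continuousOn_inner {α H : Type*} [TopologicalSpace α]
    [NormedAddCommGroup H] [InnerProductSpace ℝ H] {k : α → H} {s : Set α}
    (hK : ContinuousOn (fun xy : α × α => ⟪k xy.1, k xy.2⟫) (s ×ˢ s)) : ContinuousOn k s := by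
  intro x hx
  have hdiag : Tendsto (fun y => ⟪k y, k y⟫) (𝓝[s] x) (𝓝 ⟪k x, k x⟫) :=
    ((hK (x, x) ⟨hx, hx⟩).comp (f := fun y => (y, y))
      (continuousWithinAt_id.prodMk continuousWithinAt_id) fun _ hy => ⟨hy, hy⟩).tendsto
  have hleft : Tendsto (fun y => ⟪k y, k x⟫) (𝓝[s] x) (𝓝 ⟪k x, k x⟫) :=
    ((hK (x, x) ⟨hx, hx⟩).comp (f := fun y => (y, x))
      (continuousWithinAt_id.prodMk continuousWithinAt_const) fun _ hy => ⟨hy, hx⟩).tendsto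
  have hsq : Tendsto (fun y => ‖k y - k x‖ ^ 2) (𝓝[s] x) (𝓝 0) := by
    have h := (hdiag.sub (hleft.const_mul 2)).add_const ⟪k x, k x⟫
    rw [show ⟪k x, k x⟫ - 2 * ⟪k x, k x⟫ + ⟪k x, k x⟫ = (0 : ℝ) by ring] at h
    refine h.congr fun y => ?_
    rw [norm_sub_sq_real, real_inner_self_eq_norm_sq, real_inner_self_eq_norm_sq]
  rw [ContinuousWithinAt, tendsto_iff_norm_sub_tendsto_zero]
  simpa only [Real.sqrt_sq (norm_nonneg _), Real.sqrt_zero] using hsq.sqrt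

theorem PiLp.sum_sum_mul_norm_sq_le {ι κ : Type*} [Fintype ι] [Fintype κ]
    {β : ι × κ → Type*} [∀ i, SeminormedAddCommGroup (β i)] {c : ι → κ → ℝ}
    (hc : ∀ i j, 0 ≤ c i j) (φ : PiLp 2 β) :
    ∑ i, ∑ j, c i j * ‖φ (i, j)‖ ^ 2 ≤ (∑ i, ∑ j, c i j) * ‖φ‖ ^ 2 := by
  simp only [Finset.sum_mul]
  gcongr with i _ j _
  · exact hc i j
  · exact PiLp.norm_apply_le φ (i, j)

theorem exists_clm_Lp_two_of_ae_norm_sq_le {α E F : Type*} [MeasurableSpace α] {μ : Measure α}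
    [IsFiniteMeasure μ] [NormedAddCommGroup E] [NormedSpace ℝ E] [NormedAddCommGroup F]
    [NormedSpace ℝ F] (T : E →ₗ[ℝ] α → F) (B : E → ℝ) (C : ℝ)
    (hT : ∀ φ, AEStronglyMeasurable (T φ) μ) (hTB : ∀ φ, ∀ᵐ x ∂μ, ‖T φ x‖ ^ 2 ≤ B φ)
    (hB : ∀ φ, 0 ≤ B φ) (hBC : ∀ φ, B φ ≤ C * ‖φ‖ ^ 2) :
    ∃ A : E →L[ℝ] Lp F 2 μ, (∀ φ, A φ =ᵐ[μ] T φ) ∧ ∀ φ, ‖A φ‖ ^ 2 ≤ μ.real Set.univ * B φ := by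
  have hTB_sqrt : ∀ φ, ∀ᵐ x ∂μ, ‖T φ x‖ ≤ √(B φ) := fun φ =>
    (hTB φ).mono fun x hx => by simpa using Real.abs_le_sqrt hx
  have hmem : ∀ φ, MemLp (T φ) 2 μ := fun φ => .of_bound (hT φ) _ (hTB_sqrt φ)
  have hnorm : ∀ φ, ‖(hmem φ).toLp‖ ^ 2 ≤ μ.real Set.univ * B φ := by
    intro φ
    have h : ‖(hmem φ).toLp‖ ≤ measureUnivNNReal μ ^ (2 : ℝ≥0∞).toReal⁻¹ * √(B φ) := by
      refine Lp.norm_le_of_ae_bound (Real.sqrt_nonneg _) ?_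
      filter_upwards [(hmem φ).coeFn_toLp, hTB_sqrt φ] with x hx hxB
      rwa [hx]
    calc ‖(hmem φ).toLp‖ ^ 2 ≤ (measureUnivNNReal μ ^ (2 : ℝ≥0∞).toReal⁻¹ * √(B φ)) ^ 2 := by
          gcongr
      _ = μ.real Set.univ * B φ := by
          rw [mul_pow, Real.sq_sqrt (hB φ), ← Real.rpow_natCast, ← Real.rpow_mul (by positivity)]
          norm_num [measureUnivNNReal, Measure.real, ENNReal.coe_toNNReal_eq_toReal]
  let Λ : E →ₗ[ℝ] Lp F 2 μ :=
    { toFun φ := (hmem φ).toLp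
      map_add' φ ψ := by
        rw [← MemLp.toLp_add]
        exact MemLp.toLp_congr _ _ (.of_eq (map_add T φ ψ))
      map_smul' c φ := by
        rw [RingHom.id_apply, ← MemLp.toLp_const_smul]
        exact MemLp.toLp_congr _ _ (.of_eq (map_smul T c φ)) }
  refine ⟨Λ.mkContinuous √(μ.real Set.univ * C) fun φ => ?_, fun φ => (hmem φ).coeFn_toLp,
    hnorm⟩
  calc ‖Λ φ‖ = √(‖Λ φ‖ ^ 2) := (Real.sqrt_sq (norm_nonneg _)).symm
    _ ≤ √(μ.real Set.univ * (C * ‖φ‖ ^ 2)) := by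
        gcongr
        exact (hnorm φ).trans (by gcongr; exact hBC φ)
    _ = √(μ.real Set.univ * C) * ‖φ‖ := by
        rw [← mul_assoc, Real.sqrt_mul' _ (by positivity), Real.sqrt_sq (norm_nonneg _)]

def boundedConf {d N : ℕ} (R : ℝ) : Set (Conf d N) := {X | ∀ i i', ‖X i' - X i‖ ≤ R}

theorem isClosed_boundedConf {d N : ℕ} (R : ℝ) : IsClosed (boundedConf (d := d) (N := N) R) := by
  simp only [boundedConf, Set.ofPred_forall]
  exact isClosed_iInter fun i => isClosed_iInter fun i' =>
    isClosed_le (by fun_prop) continuous_const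

section forceField

variable {d N : ℕ} (N1 : ℕ)

theorem forceField_add (ψ χ : Fin 2 → Fin 2 → ℝ → ℝ) (X : Conf d N) :
    forceField N1 (ψ + χ) X = forceField N1 ψ X + forceField N1 χ X := by
  ext1 i
  simp only [forceField, Pi.add_apply, add_smul, Finset.sum_add_distrib, smul_add]

theorem forceField_smul (c : ℝ) (ψ : Fin 2 → Fin 2 → ℝ → ℝ) (X : Conf d N) :
    forceField N1 (c • ψ) X = c • forceField N1 ψ X := by
  ext1 i
  simp only [forceField, Pi.smul_apply, smul_eq_mul, mul_smul, ← Finset.smul_sum]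
  exact smul_comm _ _ _

theorem forceField_continuousOn {ψ : Fin 2 → Fin 2 → ℝ → ℝ} {R : ℝ}
    (hψ : ∀ p q, ContinuousOn (ψ p q) (Set.Icc 0 R)) :
    ContinuousOn (forceField (d := d) (N := N) N1 ψ) (boundedConf R) := by
  refine continuousOn_pi.2 fun i => ContinuousOn.fun_const_smul ?_ _
  refine continuousOn_finsetSum _ fun i' _ => ?_
  have hdiff : Continuous fun X : Conf d N => X i' - X i := by fun_prop
  have hdist : Set.MapsTo (fun X : Conf d N => ‖X i' - X i‖) (boundedConf R) (Set.Icc 0 R) :=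
    fun X hX => ⟨norm_nonneg _, hX i i'⟩
  exact ((hψ _ _).comp hdiff.norm.continuousOn hdist).smul hdiff.continuousOn

theorem norm_forceField_le {ψ : Fin 2 → Fin 2 → ℝ → ℝ} {b : Fin 2 → Fin 2 → ℝ} {R : ℝ}
    (hb : ∀ p q, 0 ≤ b p q) (hψ : ∀ p q, ∀ r ∈ Set.Icc 0 R, |ψ p q r| ≤ b p q)
    {X : Conf d N} (hX : X ∈ boundedConf R) (i : Fin N) :
    ‖forceField N1 ψ X i‖ ≤ (∑ q, b (typeOf N1 i) q) * R := by
  set p := typeOf N1 i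
  have hterm : ∀ i', ‖ψ p (typeOf N1 i') ‖X i' - X i‖ • (X i' - X i)‖ ≤ (∑ q, b p q) * R := by
    intro i'
    rw [norm_smul, Real.norm_eq_abs]
    exact mul_le_mul ((hψ _ _ _ ⟨norm_nonneg _, hX i i'⟩).trans
      (Finset.single_le_sum (fun q _ => hb p q) (Finset.mem_univ _)))
      (hX i i') (norm_nonneg _) (Finset.sum_nonneg fun q _ => hb p q)
  have hN : (N : ℝ) ≠ 0 := Nat.cast_ne_zero.2 (Fin.pos i).ne'
  calc ‖forceField N1 ψ X i‖
      ≤ (N : ℝ)⁻¹ * ∑ i', ‖ψ p (typeOf N1 i') ‖X i' - X i‖ • (X i' - X i)‖ := by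
        rw [forceField, norm_smul, norm_inv, Real.norm_natCast]
        gcongr
        exact norm_sum_le _ _
    _ ≤ (N : ℝ)⁻¹ * ∑ _i' : Fin N, (∑ q, b p q) * R := by gcongr with i'; exact hterm i'
    _ = (∑ q, b p q) * R := by
        rw [Finset.sum_const, Finset.card_univ, Fintype.card_fin, nsmul_eq_mul, ← mul_assoc,
          inv_mul_cancel₀ hN, one_mul]

end forceField

section rkhs

variable {H : Fin 2 → Fin 2 → Type*} [∀ p q, NormedAddCommGroup (H p q)]
  [∀ p q, InnerProductSpace ℝ (H p q)] (k : ∀ p q, ℝ → H p q)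

theorem rkhsFun_add (φ χ : ∀ p q, H p q) : rkhsFun k (φ + χ) = rkhsFun k φ + rkhsFun k χ := by
  ext p q r
  exact inner_add_left _ _ _

theorem rkhsFun_smul (c : ℝ) (φ : ∀ p q, H p q) : rkhsFun k (c • φ) = c • rkhsFun k φ := by
  ext p q r
  exact real_inner_smul_left _ _ _

theorem abs_rkhsFun_le {κ : Fin 2 → Fin 2 → ℝ} {s : Set ℝ}
    (hk : ∀ p q, ∀ r ∈ s, ‖k p q r‖ ≤ κ p q) (φ : ∀ p q, H p q) (p q : Fin 2) {r : ℝ}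
    (hr : r ∈ s) : |rkhsFun k φ p q r| ≤ κ p q * ‖φ p q‖ :=
  (abs_real_inner_le_norm _ _).trans <| by
    rw [mul_comm]; exact mul_le_mul_of_nonneg_right (hk p q r hr) (norm_nonneg _)

def forceOperator {d N : ℕ} (N1 : ℕ) :
    (PiLp 2 fun pq : Fin 2 × Fin 2 => H pq.1 pq.2) →ₗ[ℝ] Conf d N → EConf d N where
  toFun φ X := WithLp.toLp 2 (forceField N1 (rkhsFun k fun p q => φ (p, q)) X)
  map_add' φ χ := by
    funext X
    exact congrArg (WithLp.toLp 2) ((congrArg (forceField N1 · X) (rkhsFun_add k _ _)).trans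
      (forceField_add N1 _ _ X))
  map_smul' c φ := by
    funext X
    exact congrArg (WithLp.toLp 2) ((congrArg (forceField N1 · X) (rkhsFun_smul k _ _)).trans
      (forceField_smul N1 _ _ X))

end rkhs

section forceOperator

variable {d N : ℕ} (N1 : ℕ) {H : Fin 2 → Fin 2 → Type*} [∀ p q, NormedAddCommGroup (H p q)]
  [∀ p q, InnerProductSpace ℝ (H p q)] {k : ∀ p q, ℝ → H p q} {R : ℝ}

theorem forceOperator_continuousOn (hk : ∀ p q, ContinuousOn (k p q) (Set.Icc 0 R))
    (φ : PiLp 2 fun pq : Fin 2 × Fin 2 => H pq.1 pq.2) :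
    ContinuousOn (forceOperator (d := d) (N := N) k N1 φ) (boundedConf R) :=
  (PiLp.continuous_toLp 2 _).comp_continuousOn
    (forceField_continuousOn N1 fun p q => continuousOn_const.inner (hk p q))

theorem norm_forceOperator_sq_le {κ : Fin 2 → Fin 2 → ℝ} (hκ0 : ∀ p q, 0 ≤ κ p q)
    (hk : ∀ p q, ∀ r ∈ Set.Icc 0 R, ‖k p q r‖ ≤ κ p q)
    (φ : PiLp 2 fun pq : Fin 2 × Fin 2 => H pq.1 pq.2) {X : Conf d N} (hX : X ∈ boundedConf R) :
    ‖forceOperator k N1 φ X‖ ^ 2 ≤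
      N * ∑ p : Fin 2, ∑ q : Fin 2, 2 * κ p q ^ 2 * R ^ 2 * ‖φ (p, q)‖ ^ 2 := by
  set M := ∑ p : Fin 2, ∑ q : Fin 2, 2 * κ p q ^ 2 * R ^ 2 * ‖φ (p, q)‖ ^ 2
  have hagent : ∀ i, ‖forceField N1 (rkhsFun k fun p q => φ (p, q)) X i‖ ^ 2 ≤ M := by
    intro i
    set p := typeOf N1 i
    have hb : ∀ p q, 0 ≤ κ p q * ‖φ (p, q)‖ := fun p q => mul_nonneg (hκ0 p q) (norm_nonneg _)
    calc ‖forceField N1 (rkhsFun k fun p q => φ (p, q)) X i‖ ^ 2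
        ≤ ((∑ q, κ p q * ‖φ (p, q)‖) * R) ^ 2 := by
          gcongr
          exact norm_forceField_le N1 hb (fun p q r hr => abs_rkhsFun_le k hk _ p q hr) hX i
      _ ≤ (2 * ∑ q, (κ p q * ‖φ (p, q)‖) ^ 2) * R ^ 2 := by
          rw [mul_pow]
          gcongr
          simpa using sq_sum_le_card_mul_sum_sq (s := Finset.univ)
            (f := fun q => κ p q * ‖φ (p, q)‖)
      _ = ∑ q, 2 * κ p q ^ 2 * R ^ 2 * ‖φ (p, q)‖ ^ 2 := by
          simp only [Fin.sum_univ_two]; ring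
      _ ≤ M := Finset.single_le_sum (f := fun p => ∑ q, 2 * κ p q ^ 2 * R ^ 2 * ‖φ (p, q)‖ ^ 2)
          (fun _ _ => by positivity) (Finset.mem_univ p)
  rw [PiLp.norm_sq_eq_of_L2]
  calc ∑ i, ‖forceField N1 (rkhsFun k fun p q => φ (p, q)) X i‖ ^ 2 ≤ ∑ _i : Fin N, M :=
        Finset.sum_le_sum fun i _ => hagent i
    _ = N * M := by rw [Finset.sum_const, Finset.card_univ, Fintype.card_fin, nsmul_eq_mul]

end forceOperator

/-- `L²(ρ_X)`, with inner product `(1/N) ∑ᵢ ∫ ⟪fᵢ, gᵢ⟫ dρ_X`, is realised as `Lp (ℝ^{dN}) 2 ν` with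
`ν = (1/N) • ρ_X`, and the product RKHS as the `PiLp 2`-product. -/
theorem forceOperator_bounded_general
    (d N1 N2 : ℕ) (hN1 : 0 < N1)
    (R : ℝ)
    (ρX : Measure (Conf d (N1 + N2))) [IsProbabilityMeasure ρX]
    (hsupp : ∀ᵐ X ∂ρX, ∀ i i' : Fin (N1 + N2), ‖X i' - X i‖ ≤ R)
    (H : Fin 2 → Fin 2 → Type*) [∀ p q, NormedAddCommGroup (H p q)]
    [∀ p q, InnerProductSpace ℝ (H p q)]
    (k : ∀ p q, ℝ → H p q)
    -- Mercer: continuity of each `K^{pq}` on `[0,R]²`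
    (hK_cont : ∀ p q, ContinuousOn (fun rr : ℝ × ℝ => (⟪k p q rr.1, k p q rr.2⟫ : ℝ))
      (Set.Icc 0 R ×ˢ Set.Icc 0 R))
    -- `κ_{pq}² = sup_{r ∈ [0,R]} K^{pq}(r,r) < ∞`
    (κ : Fin 2 → Fin 2 → ℝ) (hκ0 : ∀ p q, 0 ≤ κ p q)
    (hκ : ∀ p q, IsLUB ((fun r => (⟪k p q r, k p q r⟫ : ℝ)) '' Set.Icc 0 R) ((κ p q) ^ 2)) :
    ∃ A : (PiLp 2 fun pq : Fin 2 × Fin 2 => H pq.1 pq.2) →L[ℝ]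
        (Lp (EConf d (N1 + N2)) 2 (((N1 + N2 : ℕ) : ℝ≥0∞)⁻¹ • ρX)),
      (∀ φ : PiLp 2 fun pq : Fin 2 × Fin 2 => H pq.1 pq.2,
        ∀ᵐ X ∂(((N1 + N2 : ℕ) : ℝ≥0∞)⁻¹ • ρX),
          (A φ) X = (WithLp.toLp 2 (forceField N1 (rkhsFun k (fun p q => φ (p, q))) X) : EConf d (N1 + N2)))
      ∧ ∀ φ : PiLp 2 fun pq : Fin 2 × Fin 2 => H pq.1 pq.2,
          ‖A φ‖ ^ 2 ≤ ∑ p : Fin 2, ∑ q : Fin 2, 2 * (κ p q) ^ 2 * R ^ 2 * ‖φ (p, q)‖ ^ 2 := by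
  have hN : ((N1 + N2 : ℕ) : ℝ) ≠ 0 := by positivity
  set ν := ((N1 + N2 : ℕ) : ℝ≥0∞)⁻¹ • ρX
  have : IsFiniteMeasure ν := ρX.smul_finite (ENNReal.inv_ne_top.2 (by positivity))
  have hsuppν : ∀ᵐ X ∂ν, X ∈ boundedConf R := Measure.ae_smul_measure hsupp _
  have hk : ∀ p q, ∀ r ∈ Set.Icc 0 R, ‖k p q r‖ ≤ κ p q := fun p q r hr =>
    (pow_le_pow_iff_left₀ (norm_nonneg _) (hκ0 p q) two_ne_zero).1 <| by
      simpa only [real_inner_self_eq_norm_sq] using (hκ p q).1 ⟨r, hr, rfl⟩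
  obtain ⟨A, hA, hAB⟩ := exists_clm_Lp_two_of_ae_norm_sq_le (forceOperator k N1) _
    ((N1 + N2 : ℕ) * ∑ p : Fin 2, ∑ q : Fin 2, 2 * κ p q ^ 2 * R ^ 2)
    (fun φ => by
      rw [← Measure.restrict_eq_self_of_ae_mem hsuppν]
      exact (forceOperator_continuousOn N1 (fun p q => continuousOn_of_continuousOn_inner
        (hK_cont p q)) φ).aestronglyMeasurable (isClosed_boundedConf R).measurableSet)
    (fun φ => hsuppν.mono fun X hX => norm_forceOperator_sq_le N1 hκ0 hk φ hX)
    (fun φ => by positivity)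
    (fun φ => by
      rw [mul_assoc]
      gcongr
      exact PiLp.sum_sum_mul_norm_sq_le (fun p q => by positivity) φ)
  refine ⟨A, hA, fun φ => (hAB φ).trans_eq ?_⟩
  have hν : ν.real Set.univ = ((N1 + N2 : ℕ) : ℝ)⁻¹ := by
    rw [measureReal_ennreal_smul_apply, probReal_univ, mul_one, ENNReal.toReal_inv,
      ENNReal.toReal_natCast]
  rw [hν, ← mul_assoc, inv_mul_cancel₀ hN, one_mul]

/-- The operator `A : ∏_{p,q} H_{K^{pq}} → L²(ρ_X)`, `Aφ = F_φ`, is a bounded linear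
operator and satisfies `‖Aφ‖²_{L²(ρ_X)} ≤ ∑_{p,q} 2 κ_{pq}² R² ‖φ^{pq}‖²_{H_{K^{pq}}}`.

Here `L²(ρ_X)` (whose inner product is `⟨f,g⟩ = (1/N) ∑ᵢ ∫ ⟪fᵢ, gᵢ⟫ dρ_X`) is realised
as `Lp (ℝ^{dN}) 2 ν` with `ν = (1/N) • ρ_X`, the product RKHS is realised as the
`PiLp 2`-product, and "the operator `Aφ = F_φ` is bounded linear" is rendered as the
existence of a continuous linear map agreeing `ν`-a.e. with `φ ↦ F_φ`. -/
theorem forceOperator_bounded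
    (d N1 N2 : ℕ) (hd : 0 < d) (hN1 : 0 < N1) (hN2 : 0 < N2)
    (R : ℝ) (hR : 0 < R)
    (ρX : Measure (Conf d (N1 + N2))) [IsProbabilityMeasure ρX]
    (hsupp : ∀ᵐ X ∂ρX, ∀ i i' : Fin (N1 + N2), ‖X i' - X i‖ ≤ R)
    (H : Fin 2 → Fin 2 → Type*) [∀ p q, NormedAddCommGroup (H p q)]
    [∀ p q, InnerProductSpace ℝ (H p q)] [∀ p q, CompleteSpace (H p q)]
    (k : ∀ p q, ℝ → H p q)
    -- Mercer: continuity of each `K^{pq}` on `[0,R]²`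
    (hK_cont : ∀ p q, ContinuousOn (fun rr : ℝ × ℝ => (⟪k p q rr.1, k p q rr.2⟫ : ℝ))
      (Set.Icc 0 R ×ˢ Set.Icc 0 R))
    -- `κ_{pq}² = sup_{r ∈ [0,R]} K^{pq}(r,r) < ∞`
    (κ : Fin 2 → Fin 2 → ℝ) (hκ0 : ∀ p q, 0 ≤ κ p q)
    (hκ : ∀ p q, IsLUB ((fun r => (⟪k p q r, k p q r⟫ : ℝ)) '' Set.Icc 0 R) ((κ p q) ^ 2)) :
    ∃ A : (PiLp 2 fun pq : Fin 2 × Fin 2 => H pq.1 pq.2) →L[ℝ]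
        (Lp (EConf d (N1 + N2)) 2 (((N1 + N2 : ℕ) : ℝ≥0∞)⁻¹ • ρX)),
      (∀ φ : PiLp 2 fun pq : Fin 2 × Fin 2 => H pq.1 pq.2,
        ∀ᵐ X ∂(((N1 + N2 : ℕ) : ℝ≥0∞)⁻¹ • ρX),
          (A φ) X = (WithLp.toLp 2 (forceField N1 (rkhsFun k (fun p q => φ (p, q))) X) : EConf d (N1 + N2)))
      ∧ ∀ φ : PiLp 2 fun pq : Fin 2 × Fin 2 => H pq.1 pq.2,
          ‖A φ‖ ^ 2 ≤ ∑ p : Fin 2, ∑ q : Fin 2, 2 * (κ p q) ^ 2 * R ^ 2 * ‖φ (p, q)‖ ^ 2 :=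
  forceOperator_bounded_general d N1 N2 hN1 R ρX hsupp H k hK_cont κ hκ0 hκ

end
end

section
/- The operator B := A*A on ∏_{p,q} H_{K^{pq}} is a positive trace-class operator, and its trace satisfies Tr(B) ≤ 2 κ_max² R², where κ_max := max_{p,q} κ_{pq}. -/
open MeasureTheory
open scoped BigOperators ENNReal RealInnerProductSpace

set_option maxHeartbeats 1000000
set_option synthInstance.maxHeartbeats 400000

noncomputable section

/-- `κ_max = max_{p,q} κ_{pq}` -/
def maxOver (f : Fin 2 → Fin 2 → ℝ) : ℝ := max (max (f 0 0) (f 0 1)) (max (f 1 0) (f 1 1))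

/-- finite `PiLp`-products of complete spaces are complete -/
instance piLpProdComplete (H : Fin 2 → Fin 2 → Type*) [∀ p q, NormedAddCommGroup (H p q)]
    [∀ p q, CompleteSpace (H p q)] :
    CompleteSpace (PiLp 2 fun pq : Fin 2 × Fin 2 => H pq.1 pq.2) :=
  inferInstance


/-!
`B = A†A` is positive and `⟪B e, e⟫ = ‖A e‖²`, so it suffices to bound `∑_{n ∈ s} ‖A e_n‖²`
uniformly over finite sets `s` of an orthonormal family. For a fixed configuration `X`, each
coordinate `(F_φ(X)_i)_j` is `⟪v_{ij}(X), φ⟫` for an explicit `v_{ij}(X)` of norm at most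
`N⁻¹ κ_max ∑_{i'} |(x_{i'} - x_i)_j|`. Bessel's inequality, Cauchy–Schwarz and the support
bound give `∑_n ‖F_{e_n}(X)‖² ≤ ∑_{i,j} ‖v_{ij}(X)‖² ≤ N κ_max² R²`, and integrating against
`ρ_X / N` leaves `κ_max² R²`.
-/

theorem PiLp.inner_single_left {𝕜 ι : Type*} [RCLike 𝕜] [Fintype ι] [DecidableEq ι]
    {β : ι → Type*} [∀ i, NormedAddCommGroup (β i)] [∀ i, InnerProductSpace 𝕜 (β i)]
    (i : ι) (a : β i) (v : PiLp 2 β) :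
    inner 𝕜 (PiLp.single 2 i a) v = inner 𝕜 a (v i) := by
  rw [PiLp.inner_apply, Finset.sum_eq_single i]
  · rw [PiLp.single_eq_same]
  · intro i' _ hi'
    rw [PiLp.single_eq_of_ne (p := 2) hi', inner_zero_left]
  · simp

theorem sum_sq_sum_abs_le_card_mul_sum_norm_sq {ι ι' : Type*} [Fintype ι] [Fintype ι']
    (v : ι → EuclideanSpace ℝ ι') :
    ∑ j, (∑ i, |v i j|) ^ 2 ≤ Fintype.card ι * ∑ i, ‖v i‖ ^ 2 := by
  calc ∑ j, (∑ i, |v i j|) ^ 2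
      ≤ ∑ j, Fintype.card ι * ∑ i, |v i j| ^ 2 :=
        Finset.sum_le_sum fun j _ => sq_sum_le_card_mul_sum_sq
    _ = Fintype.card ι * ∑ i, ‖v i‖ ^ 2 := by
        simp_rw [EuclideanSpace.real_norm_sq_eq, sq_abs, ← Finset.mul_sum]
        rw [Finset.sum_comm]

theorem le_maxOver (f : Fin 2 → Fin 2 → ℝ) (p q : Fin 2) : f p q ≤ maxOver f := by
  fin_cases p <;> fin_cases q <;> simp [maxOver]

theorem sum_norm_sq_le_of_ae_sum_norm_sq_le {α E ι : Type*} [MeasurableSpace α]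
    [NormedAddCommGroup E] [InnerProductSpace ℝ E] {μ : Measure α} [IsFiniteMeasure μ]
    (f : ι → Lp E 2 μ) (s : Finset ι) {C : ℝ} (h : ∀ᵐ x ∂μ, ∑ n ∈ s, ‖f n x‖ ^ 2 ≤ C) :
    ∑ n ∈ s, ‖f n‖ ^ 2 ≤ μ.real Set.univ * C := by
  have hint : ∀ n, Integrable (fun x => ‖f n x‖ ^ 2) μ := fun n => by
    simpa only [real_inner_self_eq_norm_sq] using L2.integrable_inner (𝕜 := ℝ) (f n) (f n)
  calc ∑ n ∈ s, ‖f n‖ ^ 2 = ∫ x, ∑ n ∈ s, ‖f n x‖ ^ 2 ∂μ := by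
        rw [integral_finsetSum s fun n _ => hint n]
        refine Finset.sum_congr rfl fun n _ => ?_
        simp only [← real_inner_self_eq_norm_sq, L2.inner_def]
    _ ≤ ∫ _, C ∂μ := integral_mono_ae (integrable_finsetSum s fun n _ => hint n)
        (integrable_const C) h
    _ = μ.real Set.univ * C := by rw [integral_const, smul_eq_mul]

theorem ContinuousLinearMap.summable_inner_adjoint_comp_self_and_tsum_le {E F ι : Type*}
    [NormedAddCommGroup E] [InnerProductSpace ℝ E] [CompleteSpace E]
    [NormedAddCommGroup F] [InnerProductSpace ℝ F] [CompleteSpace F]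
    (A : E →L[ℝ] F) (e : ι → E) {C : ℝ} (h : ∀ s : Finset ι, ∑ n ∈ s, ‖A (e n)‖ ^ 2 ≤ C) :
    Summable (fun n => ⟪(adjoint A ∘L A) (e n), e n⟫)
      ∧ ∑' n, ⟪(adjoint A ∘L A) (e n), e n⟫ ≤ C := by
  have hdiag : ∀ n, ⟪(adjoint A ∘L A) (e n), e n⟫ = ‖A (e n)‖ ^ 2 := fun n => by
    rw [comp_apply, adjoint_inner_left, real_inner_self_eq_norm_sq]
  simp only [hdiag]
  have hsum : Summable (fun n => ‖A (e n)‖ ^ 2) := summable_of_sum_le (fun n => by positivity) h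
  exact ⟨hsum, hsum.tsum_le_of_sum_le h⟩

section ForceField

variable {d N : ℕ} (N1 : ℕ) {H : Fin 2 → Fin 2 → Type*} [∀ p q, NormedAddCommGroup (H p q)]
  [∀ p q, InnerProductSpace ℝ (H p q)] (k : ∀ p q, ℝ → H p q)

def forceFieldRepr (X : Conf d N) (i : Fin N) (j : Fin d) :
    PiLp 2 fun pq : Fin 2 × Fin 2 => H pq.1 pq.2 :=
  (N : ℝ)⁻¹ • ∑ i', (X i' - X i) j •
    PiLp.single 2 (typeOf N1 i, typeOf N1 i') (k _ _ ‖X i' - X i‖)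

theorem forceField_apply_apply (φ : PiLp 2 fun pq : Fin 2 × Fin 2 => H pq.1 pq.2)
    (X : Conf d N) (i : Fin N) (j : Fin d) :
    forceField N1 (rkhsFun k fun p q => φ (p, q)) X i j = ⟪forceFieldRepr N1 k X i j, φ⟫ := by
  simp only [forceField, forceFieldRepr, rkhsFun, PiLp.smul_apply, WithLp.ofLp_sum,
    Finset.sum_apply, smul_eq_mul]
  rw [real_inner_smul_left, sum_inner]
  congr 1
  refine Finset.sum_congr rfl fun i' _ => ?_
  rw [real_inner_smul_left, PiLp.inner_single_left, real_inner_comm, mul_comm]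

variable {N1 k}

theorem norm_forceFieldRepr_le {R κ : ℝ} (hk : ∀ p q, ∀ r ∈ Set.Icc 0 R, ‖k p q r‖ ≤ κ)
    {X : Conf d N} (hX : ∀ i i', ‖X i' - X i‖ ≤ R) (i : Fin N) (j : Fin d) :
    ‖forceFieldRepr N1 k X i j‖ ≤ (N : ℝ)⁻¹ * (κ * ∑ i', |(X i' - X i) j|) := by
  rw [forceFieldRepr, norm_smul, Real.norm_eq_abs, abs_inv, Nat.abs_cast, Finset.mul_sum]
  gcongr
  refine (norm_sum_le _ _).trans (Finset.sum_le_sum fun i' _ => ?_)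
  rw [norm_smul, PiLp.norm_single, Real.norm_eq_abs, mul_comm]
  gcongr
  exact hk _ _ _ ⟨norm_nonneg _, hX i i'⟩

theorem sum_norm_sq_forceFieldRepr_le {R κ : ℝ} (hk : ∀ p q, ∀ r ∈ Set.Icc 0 R, ‖k p q r‖ ≤ κ)
    {X : Conf d N} (hX : ∀ i i', ‖X i' - X i‖ ≤ R) (i : Fin N) :
    ∑ j, ‖forceFieldRepr N1 k X i j‖ ^ 2 ≤ κ ^ 2 * R ^ 2 := by
  have hN : (N : ℝ) ≠ 0 := by exact_mod_cast (Fin.pos i).ne'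
  calc ∑ j, ‖forceFieldRepr N1 k X i j‖ ^ 2
      ≤ ∑ j, ((N : ℝ)⁻¹ * (κ * ∑ i', |(X i' - X i) j|)) ^ 2 := by
        gcongr with j
        exact norm_forceFieldRepr_le hk hX i j
    _ = ((N : ℝ)⁻¹ * κ) ^ 2 * ∑ j, (∑ i', |(X i' - X i) j|) ^ 2 := by
        rw [Finset.mul_sum]
        exact Finset.sum_congr rfl fun j _ => by ring
    _ ≤ ((N : ℝ)⁻¹ * κ) ^ 2 * (N * ∑ i', R ^ 2) := by
        gcongr
        refine (sum_sq_sum_abs_le_card_mul_sum_norm_sq fun i' => X i' - X i).trans ?_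
        rw [Fintype.card_fin]
        gcongr with i'
        exact hX i i'
    _ = κ ^ 2 * R ^ 2 := by
        rw [Finset.sum_const, Finset.card_univ, Fintype.card_fin, nsmul_eq_mul]
        field_simp

theorem sum_norm_sq_forceField_le {ι : Type*}
    {e : ι → PiLp 2 fun pq : Fin 2 × Fin 2 => H pq.1 pq.2} (he : Orthonormal ℝ e) (s : Finset ι)
    {R κ : ℝ} (hk : ∀ p q, ∀ r ∈ Set.Icc 0 R, ‖k p q r‖ ≤ κ)
    {X : Conf d N} (hX : ∀ i i', ‖X i' - X i‖ ≤ R) :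
    ∑ n ∈ s, ‖(WithLp.toLp 2 (forceField N1 (rkhsFun k fun p q => e n (p, q)) X) : EConf d N)‖ ^ 2
      ≤ N * κ ^ 2 * R ^ 2 := by
  calc _ = ∑ i, ∑ j, ∑ n ∈ s, ⟪forceFieldRepr N1 k X i j, e n⟫ ^ 2 := by
        simp only [PiLp.norm_sq_eq_of_L2, forceField_apply_apply, Real.norm_eq_abs, sq_abs]
        rw [Finset.sum_comm]
        exact Finset.sum_congr rfl fun i _ => Finset.sum_comm
    _ ≤ ∑ i, ∑ j, ‖forceFieldRepr N1 k X i j‖ ^ 2 := by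
        gcongr with i _ j
        simpa only [Real.norm_eq_abs, sq_abs, real_inner_comm] using
          he.sum_inner_products_le (forceFieldRepr N1 k X i j)
    _ ≤ ∑ _i : Fin N, κ ^ 2 * R ^ 2 := by
        gcongr with i
        exact sum_norm_sq_forceFieldRepr_le hk hX i
    _ = N * κ ^ 2 * R ^ 2 := by simp [mul_assoc]

end ForceField

theorem forceOperator_traceClass_general
    (d N1 N2 : ℕ) (hN1 : 0 < N1)
    (R : ℝ)
    (ρX : Measure (Conf d (N1 + N2))) [IsProbabilityMeasure ρX]
    (hsupp : ∀ᵐ X ∂ρX, ∀ i i' : Fin (N1 + N2), ‖X i' - X i‖ ≤ R)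
    (H : Fin 2 → Fin 2 → Type) [∀ p q, NormedAddCommGroup (H p q)]
    [∀ p q, InnerProductSpace ℝ (H p q)] [∀ p q, CompleteSpace (H p q)]
    (k : ∀ p q, ℝ → H p q)
    (κ : Fin 2 → Fin 2 → ℝ) (hκ0 : ∀ p q, 0 ≤ κ p q)
    (hκ : ∀ p q, IsLUB ((fun r => (⟪k p q r, k p q r⟫ : ℝ)) '' Set.Icc 0 R) ((κ p q) ^ 2))
    (A : (PiLp 2 fun pq : Fin 2 × Fin 2 => H pq.1 pq.2) →L[ℝ]
        (Lp (EConf d (N1 + N2)) 2 (((N1 + N2 : ℕ) : ℝ≥0∞)⁻¹ • ρX)))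
    (hA : ∀ φ : PiLp 2 fun pq : Fin 2 × Fin 2 => H pq.1 pq.2,
      ∀ᵐ X ∂(((N1 + N2 : ℕ) : ℝ≥0∞)⁻¹ • ρX),
        (A φ) X = (WithLp.toLp 2 (forceField N1 (rkhsFun k (fun p q => φ (p, q))) X) : EConf d (N1 + N2))) :
    (((ContinuousLinearMap.adjoint A).comp A).IsPositive)
    ∧ ∀ (ι : Type) (e : HilbertBasis ι ℝ (PiLp 2 fun pq : Fin 2 × Fin 2 => H pq.1 pq.2)),
        Summable (fun n : ι =>
          (⟪((ContinuousLinearMap.adjoint A).comp A) (e n), e n⟫ : ℝ))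
        ∧ ∑' n : ι, (⟪((ContinuousLinearMap.adjoint A).comp A) (e n), e n⟫ : ℝ)
            ≤ 2 * (maxOver κ) ^ 2 * R ^ 2 := by
  have hN : ((N1 + N2 : ℕ) : ℝ) ≠ 0 := by positivity
  have : IsFiniteMeasure (((N1 + N2 : ℕ) : ℝ≥0∞)⁻¹ • ρX) := ρX.smul_finite (by simp [hN1.ne'])
  have hk : ∀ p q, ∀ r ∈ Set.Icc 0 R, ‖k p q r‖ ≤ maxOver κ := fun p q r hr => by
    have hle : ‖k p q r‖ ^ 2 ≤ κ p q ^ 2 := by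
      simpa only [real_inner_self_eq_norm_sq] using (hκ p q).1 ⟨r, hr, rfl⟩
    exact (abs_le_of_sq_le_sq' hle (hκ0 p q)).2.trans (le_maxOver κ p q)
  refine ⟨A.isPositive_adjoint_comp_self, fun ι e =>
    A.summable_inner_adjoint_comp_self_and_tsum_le e fun s => ?_⟩
  have hforce : ∀ᵐ X ∂(((N1 + N2 : ℕ) : ℝ≥0∞)⁻¹ • ρX),
      ∑ n ∈ s, ‖A (e n) X‖ ^ 2 ≤ (N1 + N2 : ℕ) * maxOver κ ^ 2 * R ^ 2 := by
    filter_upwards [Measure.ae_smul_measure hsupp _,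
      (ae_ball_iff s.countable_toSet).2 fun n _ => hA (e n)] with X hX hAX
    rw [Finset.sum_congr rfl fun n hn => by rw [hAX n hn]]
    exact sum_norm_sq_forceField_le e.orthonormal s hk hX
  calc ∑ n ∈ s, ‖A (e n)‖ ^ 2
      ≤ (((N1 + N2 : ℕ) : ℝ≥0∞)⁻¹ • ρX).real Set.univ
          * ((N1 + N2 : ℕ) * maxOver κ ^ 2 * R ^ 2) :=
        sum_norm_sq_le_of_ae_sum_norm_sq_le (fun n => A (e n)) s hforce
    _ = maxOver κ ^ 2 * R ^ 2 := by
        rw [measureReal_def, Measure.smul_apply, measure_univ, smul_eq_mul, mul_one,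
          ENNReal.toReal_inv, ENNReal.toReal_natCast]
        field_simp
    _ ≤ 2 * maxOver κ ^ 2 * R ^ 2 := by nlinarith [sq_nonneg (maxOver κ * R)]

/-- The operator `B := A*A` on `∏_{p,q} H_{K^{pq}}` is a positive trace-class operator and
`Tr(B) ≤ 2 κ_max² R²` where `κ_max = max_{p,q} κ_{pq}`.  Trace-class with trace bound is
rendered as: for every Hilbert basis `(e_n)` of the product space, the family
`⟪B e_n, e_n⟫` is summable with `∑ₙ ⟪B e_n, e_n⟫ ≤ 2 κ_max² R²`. -/
theorem forceOperator_traceClass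
    (d N1 N2 : ℕ) (hd : 0 < d) (hN1 : 0 < N1) (hN2 : 0 < N2)
    (R : ℝ) (hR : 0 < R)
    (ρX : Measure (Conf d (N1 + N2))) [IsProbabilityMeasure ρX]
    (hsupp : ∀ᵐ X ∂ρX, ∀ i i' : Fin (N1 + N2), ‖X i' - X i‖ ≤ R)
    (hdisp : ∀ i i' : Fin (N1 + N2),
      MemLp (fun X : Conf d (N1 + N2) => X i' - X i) 2 ρX)
    (H : Fin 2 → Fin 2 → Type) [∀ p q, NormedAddCommGroup (H p q)]
    [∀ p q, InnerProductSpace ℝ (H p q)] [∀ p q, CompleteSpace (H p q)]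
    (k : ∀ p q, ℝ → H p q)
    (hK_cont : ∀ p q, ContinuousOn (fun rr : ℝ × ℝ => (⟪k p q rr.1, k p q rr.2⟫ : ℝ))
      (Set.Icc 0 R ×ˢ Set.Icc 0 R))
    (κ : Fin 2 → Fin 2 → ℝ) (hκ0 : ∀ p q, 0 ≤ κ p q)
    (hκ : ∀ p q, IsLUB ((fun r => (⟪k p q r, k p q r⟫ : ℝ)) '' Set.Icc 0 R) ((κ p q) ^ 2))
    (A : (PiLp 2 fun pq : Fin 2 × Fin 2 => H pq.1 pq.2) →L[ℝ]
        (Lp (EConf d (N1 + N2)) 2 (((N1 + N2 : ℕ) : ℝ≥0∞)⁻¹ • ρX)))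
    (hA : ∀ φ : PiLp 2 fun pq : Fin 2 × Fin 2 => H pq.1 pq.2,
      ∀ᵐ X ∂(((N1 + N2 : ℕ) : ℝ≥0∞)⁻¹ • ρX),
        (A φ) X = (WithLp.toLp 2 (forceField N1 (rkhsFun k (fun p q => φ (p, q))) X) : EConf d (N1 + N2))) :
    (((ContinuousLinearMap.adjoint A).comp A).IsPositive)
    ∧ ∀ (ι : Type) (e : HilbertBasis ι ℝ (PiLp 2 fun pq : Fin 2 × Fin 2 => H pq.1 pq.2)),
        Summable (fun n : ι =>
          (⟪((ContinuousLinearMap.adjoint A).comp A) (e n), e n⟫ : ℝ))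
        ∧ ∑' n : ι, (⟪((ContinuousLinearMap.adjoint A).comp A) (e n), e n⟫ : ℝ)
            ≤ 2 * (maxOver κ) ^ 2 * R ^ 2 :=
  forceOperator_traceClass_general d N1 N2 hN1 R ρX hsupp H k κ hκ0 hκ A hA

end
end
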